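/- Let (S(t)) be a C₀-semigroup on H, Q a bounded self-adjoint nonnegative operator, and (S_Q(t))_{t≥0} a C₀-semigroup of self-adjoint operators on H with S(t)Q^{1/2} = Q^{1/2}S_Q(t) for all t ≥ 0. Assume that the Bochner integrals Bx = ∫₀^∞ S_Q(s)x ds and Q∞x = ∫₀^∞ S(s)QS(s)*x ds converge for every x ∈ H. Then Q∞ = (1/2) Q^{1/2} B Q^{1/2}. -/
import Mathlib


/-!
STATEMENT 10.  Let (S(t)) be a C₀-semigroup on a separable real Hilbert space H, Q a
bounded self-adjoint nonnegative operator with square root Q^{1/2}, and (S_Q(t)) a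
C₀-semigroup of self-adjoint operators on H with S(t)Q^{1/2} = Q^{1/2}S_Q(t) for all
t ≥ 0.  Assume the Bochner integrals Bx = ∫₀^∞ S_Q(s)x ds and
Q∞x = ∫₀^∞ S(s)QS(s)*x ds converge for every x ∈ H.  Then Q∞ = (1/2)Q^{1/2}BQ^{1/2}.
-/

open MeasureTheory Filter Set ContinuousLinearMap
open scoped RealInnerProductSpace

noncomputable section

variable {H : Type*} [NormedAddCommGroup H] [InnerProductSpace ℝ H] [CompleteSpace H]

theorem statement10 [TopologicalSpace.SeparableSpace H]
    (S : ℝ → H →L[ℝ] H)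
    (hS0 : S 0 = 1)
    (hSadd : ∀ s t : ℝ, 0 ≤ s → 0 ≤ t → S (s + t) = (S s).comp (S t))
    (hScont : ∀ x : H, ContinuousOn (fun t => S t x) (Set.Ici 0))
    (Q sqrtQ : H →L[ℝ] H) (hQsa : IsSelfAdjoint Q) (hQnn : ∀ x : H, 0 ≤ ⟪Q x, x⟫)
    (hsqrt_sa : IsSelfAdjoint sqrtQ) (hsqrt_nn : ∀ x : H, 0 ≤ ⟪sqrtQ x, x⟫)
    (hsqrt_sq : sqrtQ.comp sqrtQ = Q)
    (SQ : ℝ → H →L[ℝ] H)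
    (hSQ0 : SQ 0 = 1)
    (hSQadd : ∀ s t : ℝ, 0 ≤ s → 0 ≤ t → SQ (s + t) = (SQ s).comp (SQ t))
    (hSQcont : ∀ x : H, ContinuousOn (fun t => SQ t x) (Set.Ici 0))
    (hSQsa : ∀ t : ℝ, 0 ≤ t → IsSelfAdjoint (SQ t))
    (hintertwine : ∀ t : ℝ, 0 ≤ t → (S t).comp sqrtQ = sqrtQ.comp (SQ t))
    (hBconv : ∀ x : H, IntegrableOn (fun s : ℝ => SQ s x) (Set.Ioi 0))
    (hQinfconv : ∀ x : H,
      IntegrableOn (fun s : ℝ => S s (Q (ContinuousLinearMap.adjoint (S s) x)))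
        (Set.Ioi 0)) :
    ∀ x : H,
      (∫ s in Set.Ioi (0:ℝ), S s (Q (ContinuousLinearMap.adjoint (S s) x))) =
        (1/2 : ℝ) • sqrtQ (∫ s in Set.Ioi (0:ℝ), SQ s (sqrtQ x)) := by
  intro x
  -- sqrtQ ∘ adjoint (S s) = SQ s ∘ sqrtQ
  have hadj : ∀ s : ℝ, 0 ≤ s →
      sqrtQ.comp (ContinuousLinearMap.adjoint (S s)) = (SQ s).comp sqrtQ := by
    intro s hs
    have h := congrArg ContinuousLinearMap.adjoint (hintertwine s hs)
    rw [ContinuousLinearMap.adjoint_comp, ContinuousLinearMap.adjoint_comp,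
      hsqrt_sa.adjoint_eq, (hSQsa s hs).adjoint_eq] at h
    exact h
  -- pointwise identity on Ioi 0
  have key : ∀ s ∈ Set.Ioi (0:ℝ),
      S s (Q (ContinuousLinearMap.adjoint (S s) x)) = sqrtQ (SQ (2 * s) (sqrtQ x)) := by
    intro s hs
    have hs' : (0:ℝ) ≤ s := le_of_lt hs
    have h1 : sqrtQ (ContinuousLinearMap.adjoint (S s) x) = SQ s (sqrtQ x) :=
      congrFun (congrArg DFunLike.coe (hadj s hs')) x
    have h2 : Q (ContinuousLinearMap.adjoint (S s) x)
        = sqrtQ (SQ s (sqrtQ x)) := by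
      rw [← hsqrt_sq]; simp only [ContinuousLinearMap.comp_apply, h1]
    have h3 : S s (sqrtQ (SQ s (sqrtQ x))) = sqrtQ (SQ s (SQ s (sqrtQ x))) :=
      congrFun (congrArg DFunLike.coe (hintertwine s hs')) (SQ s (sqrtQ x))
    have h4 : SQ (2 * s) (sqrtQ x) = SQ s (SQ s (sqrtQ x)) := by
      rw [two_mul, hSQadd s s hs' hs']; rfl
    rw [h2, h3, h4]
  rw [setIntegral_congr_fun measurableSet_Ioi key]
  have hint : IntegrableOn (fun s : ℝ => SQ (2 * s) (sqrtQ x)) (Set.Ioi 0) := by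
    have := (integrableOn_Ioi_comp_mul_left_iff (fun s : ℝ => SQ s (sqrtQ x)) 0
      (by norm_num : (0:ℝ) < 2)).2 (by simpa using hBconv (sqrtQ x))
    simpa using this
  rw [show (fun s : ℝ => sqrtQ (SQ (2 * s) (sqrtQ x)))
      = fun s : ℝ => sqrtQ ((fun s : ℝ => SQ (2 * s) (sqrtQ x)) s) from rfl,
    ContinuousLinearMap.integral_comp_comm sqrtQ hint]
  have hchg := integral_comp_mul_left_Ioi (fun s : ℝ => SQ s (sqrtQ x)) 0
    (by norm_num : (0:ℝ) < 2)
  simp only [mul_zero] at hchg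
  rw [hchg, _root_.map_smul]
  norm_num
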